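/- Let (B⁻¹, B⁰, d_B), (G⁻¹, G⁰, d_G) be crossed modules and π, π' : B• → G• morphisms of crossed modules. Fix g ∈ G⁰. Then d_g : B⁻¹ → B⁰ ⋉_π G⁻¹ given by d_g(β) = (d_B(β), π⁻¹(β)⁻¹ · ^{g}π'⁻¹(β)) is a group homomorphism, and its image lies in the stabilizer Stab_g = {(b, γ) : d_G(γ) = π⁰(b)⁻¹ · g π'⁰(b) g⁻¹} of g for the action of B⁰ ⋉_π G⁻¹ on G⁰ by (b,γ)·g' = d_G(γ) π⁰(b) g' π'⁰(b)⁻¹. -/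

import Mathlib

/-!
Writing `d_g(β) = (d_B β, γ β)`, multiplicativity of `d_g` says that `γ` is a crossed
homomorphism for the action of `B⁻¹` on `G⁻¹` through `π⁰ ∘ d_B = d_G ∘ π⁻¹`, which by the
Peiffer identity of `G•` is conjugation by `π⁻¹`. Every map `β ↦ f(β)⁻¹ f'(β)` built from two
homomorphisms `f, f'` is such a crossed homomorphism; here `f = π⁻¹` and `f' = ᵍπ'⁻¹`.
The stabilizer condition is `d_G`-equivariance together with `d_G ∘ π⁻¹ = π⁰ ∘ d_B` and the same
for `π'`.
-/

open SemidirectProduct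

theorem SemidirectProduct.inr_mul_inl_mul_inr_mul_inl {N G : Type*} [Group N] [Group G]
    {φ : G →* MulAut N} (a b : G) (m n : N) :
    (inr a * inl m * (inr b * inl n) : N ⋊[φ] G) = inr (a * b) * inl ((φ b)⁻¹ m * n) := by
  rw [map_mul, map_mul, inl_aut_inv, map_inv]
  group

theorem SemidirectProduct.inr_mul_inl_mul_of_cocycle {N G H : Type*} [Group N] [Group G]
    [Group H] {φ : G →* MulAut N} (d : H →* G) {c : H → N}
    (hc : ∀ a b, c (a * b) = (φ (d b))⁻¹ (c a) * c b) (a b : H) :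
    (inr (d (a * b)) * inl (c (a * b)) : N ⋊[φ] G) =
      inr (d a) * inl (c a) * (inr (d b) * inl (c b)) := by
  rw [inr_mul_inl_mul_inr_mul_inl, map_mul, hc]

theorem inv_smul_eq_conj_of_peiffer {G0 G1 : Type*} [Group G0] [Group G1]
    [MulDistribMulAction G0 G1] {dG : G1 →* G0}
    (hpeiffer : ∀ γ γ' : G1, (dG γ) • γ' = γ * γ' * γ⁻¹) (γ γ' : G1) :
    (dG γ)⁻¹ • γ' = γ⁻¹ * γ' * γ := by
  rw [← map_inv, hpeiffer, inv_inv]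

theorem MonoidHom.inv_apply_mul_apply_mul {H K : Type*} [Group H] [Group K] (f f' : H →* K)
    (a b : H) :
    (f (a * b))⁻¹ * f' (a * b) = (f b)⁻¹ * ((f a)⁻¹ * f' a) * f b * ((f b)⁻¹ * f' b) := by
  simp only [map_mul]
  group

theorem d_g_hom_into_stabilizer_general
    {B0 B1 G0 G1 : Type*} [Group B0] [Group B1] [Group G0] [Group G1]
    [MulDistribMulAction G0 G1]
    (dB : B1 →* B0) (dG : G1 →* G0)
    (hG1 : ∀ (g : G0) (γ : G1), dG (g • γ) = g * dG γ * g⁻¹)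
    (hG2 : ∀ γ γ' : G1, (dG γ) • γ' = γ * γ' * γ⁻¹)
    (π0 π'0 : B0 →* G0) (π1 π'1 : B1 →* G1)
    (hcomm : ∀ β : B1, π0 (dB β) = dG (π1 β))
    (hcomm' : ∀ β : B1, π'0 (dB β) = dG (π'1 β))
    (g : G0) :
    let φ : B0 →* MulAut G1 := (MulDistribMulAction.toMulAut G0 G1).comp π0
    let dg : B1 → (G1 ⋊[φ] B0) := fun β => inr (dB β) * inl ((π1 β)⁻¹ * g • π'1 β)
    (∀ β1 β2 : B1, dg (β1 * β2) = dg β1 * dg β2) ∧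
    (∀ β : B1, dG ((π1 β)⁻¹ * g • π'1 β) = (π0 (dB β))⁻¹ * (g * π'0 (dB β) * g⁻¹)) := by
  intro φ dg
  refine ⟨inr_mul_inl_mul_of_cocycle (c := fun β => (π1 β)⁻¹ * g • π'1 β) dB fun β1 β2 => ?_,
    fun β => ?_⟩
  · change _ = (π0 (dB β2))⁻¹ • ((π1 β1)⁻¹ * g • π'1 β1) * _
    rw [hcomm, inv_smul_eq_conj_of_peiffer hG2]
    exact π1.inv_apply_mul_apply_mul ((MulDistribMulAction.toMonoidHom G1 g).comp π'1) β1 β2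
  · rw [map_mul, map_inv, hG1, ← hcomm, ← hcomm']

/-- For morphisms `π, π' : B• → G•` of crossed modules and `g ∈ G⁰`, the map
`d_g(β) = (d_B(β), π⁻¹(β)⁻¹ · ᵍπ'⁻¹(β))` into `B⁰ ⋉_π G⁻¹` is a group homomorphism
whose image lies in the stabilizer of `g`, i.e. the component
`γ_β = π⁻¹(β)⁻¹ · ᵍπ'⁻¹(β)` satisfies `d_G(γ_β) = π⁰(d_B β)⁻¹ · g · π'⁰(d_B β) · g⁻¹`. -/
theorem d_g_hom_into_stabilizer
    {B0 B1 G0 G1 : Type*} [Group B0] [Group B1] [Group G0] [Group G1]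
    [MulDistribMulAction B0 B1] [MulDistribMulAction G0 G1]
    (dB : B1 →* B0) (dG : G1 →* G0)
    (hB1 : ∀ (b : B0) (β : B1), dB (b • β) = b * dB β * b⁻¹)
    (hB2 : ∀ β β' : B1, (dB β) • β' = β * β' * β⁻¹)
    (hG1 : ∀ (g : G0) (γ : G1), dG (g • γ) = g * dG γ * g⁻¹)
    (hG2 : ∀ γ γ' : G1, (dG γ) • γ' = γ * γ' * γ⁻¹)
    (π0 π'0 : B0 →* G0) (π1 π'1 : B1 →* G1)
    (hcomm : ∀ β : B1, π0 (dB β) = dG (π1 β))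
    (hequiv : ∀ (b : B0) (β : B1), π1 (b • β) = (π0 b) • (π1 β))
    (hcomm' : ∀ β : B1, π'0 (dB β) = dG (π'1 β))
    (hequiv' : ∀ (b : B0) (β : B1), π'1 (b • β) = (π'0 b) • (π'1 β))
    (g : G0) :
    let φ : B0 →* MulAut G1 := (MulDistribMulAction.toMulAut G0 G1).comp π0
    let dg : B1 → (G1 ⋊[φ] B0) := fun β => inr (dB β) * inl ((π1 β)⁻¹ * g • π'1 β)
    (∀ β1 β2 : B1, dg (β1 * β2) = dg β1 * dg β2) ∧
    (∀ β : B1, dG ((π1 β)⁻¹ * g • π'1 β) = (π0 (dB β))⁻¹ * (g * π'0 (dB β) * g⁻¹)) :=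
  d_g_hom_into_stabilizer_general dB dG hG1 hG2 π0 π'0 π1 π'1 hcomm hcomm' g
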